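/- Assume m_{s,t} ∈ {2,3} for all distinct s,t ∈ S. Let β,β' ∈ Φ be roots such that the reflections r_β and r_{β'} are distinct and commute: r_β r_{β'} = r_{β'} r_β. Then there exist w ∈ W and s,t ∈ S such that β = w(α_s) and β' = w(α_t). -/

import Mathlib

/-!
Context: `(W, S)` is a Coxeter system for the Coxeter matrix `M` (Mathlib's convention:
the entry `0` encodes `∞`).  `V = ⊕_{s ∈ S} ℝ·α_s` is realized as `S →₀ ℝ` with
`α_s = simpleRoot s`, equipped with the canonical symmetric bilinear form `bform M`.
The canonical faithful form-preserving representation `ρ : W →* GL(V)` and the map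
`β ↦ r_β` assigning to each root its reflection are given as data, characterized by
the usual formulas (`hρ`, `hρinj`, `hρform`, `hr` below).
-/

noncomputable section

open scoped Real Pointwise

variable {S W : Type*}

/-- The simple root `α_s`. -/
def simpleRoot (s : S) : S →₀ ℝ := Finsupp.single s 1

/-- The entry `⟨α_s, α_t⟩ = -cos (π / m_{s,t})` of the canonical bilinear form,
interpreted as `-1` when `m_{s,t} = ∞` (encoded by `0`). -/
def formEntry (M : CoxeterMatrix S) (s t : S) : ℝ :=
  if M s t = 0 then -1 else -Real.cos (Real.pi / (M s t : ℝ))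

/-- The canonical symmetric bilinear form on `V = ⊕_{s ∈ S} ℝ·α_s`. -/
def bform (M : CoxeterMatrix S) : (S →₀ ℝ) →ₗ[ℝ] (S →₀ ℝ) →ₗ[ℝ] ℝ :=
  Finsupp.basisSingleOne.constr ℝ fun s =>
    Finsupp.basisSingleOne.constr ℝ fun t => formEntry M s t

variable [Group W]

/-- The root system `Φ = { w (α_s) : w ∈ W, s ∈ S }`. -/
def rootSystem (ρ : W →* ((S →₀ ℝ) ≃ₗ[ℝ] (S →₀ ℝ))) : Set (S →₀ ℝ) :=
  Set.range fun p : W × S => ρ p.1 (simpleRoot p.2)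

/-- A subset `𝒳 ⊆ V` is almost parabolic (AP): (AP1) the vectors of `𝒳` are linearly
independent, and (AP2) any two elements of `𝒳` are of the form `w (α_s)`, `w (α_t)` for a
common `w ∈ W`. -/
def IsAP (ρ : W →* ((S →₀ ℝ) ≃ₗ[ℝ] (S →₀ ℝ))) (𝒳 : Set (S →₀ ℝ)) : Prop :=
  LinearIndependent ℝ ((↑) : 𝒳 → (S →₀ ℝ)) ∧
    ∀ β ∈ 𝒳, ∀ γ ∈ 𝒳, ∃ (w : W) (s t : S),
      ρ w (simpleRoot s) = β ∧ ρ w (simpleRoot t) = γ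

/-- `g ∈ W` is a product of `n` elements of `T`. -/
def HasLen (T : Set W) (g : W) (n : ℕ) : Prop :=
  ∃ l : List W, (∀ x ∈ l, x ∈ T) ∧ l.prod = g ∧ l.length = n

/-- `u` has minimal word length (w.r.t. the generating set `T`) in the coset `u·H`. -/
def MinimalInCoset (T : Set W) (H : Subgroup W) (u : W) : Prop :=
  ∀ h ∈ H, ∀ m, HasLen T (u * h) m → ∃ n ≤ m, HasLen T u n

/-!
Distinct commuting reflections `r_β, r_β'` have orthogonal roots, so `z = r_β r_β'` is an
involution acting by `v ↦ v - 2⟨β,v⟩β - 2⟨β',v⟩β'`. We induct on `ℓ(z)`. Let `s` be a right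
descent of `z`. If conjugating by `s` shortens `z`, conjugate the pair and recurse. Otherwise
positivity of roots gives `z α_s = -α_s`, so `α_s = aβ + bβ'` with `a² + b² = 1`. Since
`m_{s,t} ∈ {2,3}`, `2⟨α_t, γ⟩ ∈ ℤ` for every root `γ`, so `2a, 2b ∈ ℤ` and `α_s = ±β` or
`α_s = ±β'`. Running the same argument at a right descent `t ≠ s` of the other reflection
shows that the other root is `±α_t`. Orthogonal signed simple roots are simultaneously simple.
-/

section BilinearForm

variable {M : CoxeterMatrix S}

lemma simpleRoot_eq_basisSingleOne (s : S) :
    simpleRoot s = Finsupp.basisSingleOne (R := ℝ) s := by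
  rw [Finsupp.coe_basisSingleOne, simpleRoot]

@[simp]
lemma bform_simpleRoot_simpleRoot (s t : S) :
    bform M (simpleRoot s) (simpleRoot t) = formEntry M s t := by
  rw [simpleRoot_eq_basisSingleOne, simpleRoot_eq_basisSingleOne, bform,
    Module.Basis.constr_basis, Module.Basis.constr_basis]

@[simp]
lemma formEntry_self (s : S) : formEntry M s s = 1 := by
  simp [formEntry]

lemma formEntry_comm (s t : S) : formEntry M s t = formEntry M t s := by
  rw [formEntry, formEntry, M.symmetric]

lemma bform_comm (x y : S →₀ ℝ) : bform M x y = bform M y x := by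
  have hflip : (bform M).flip = bform M := by
    refine LinearMap.ext_basis Finsupp.basisSingleOne Finsupp.basisSingleOne fun s t => ?_
    simp only [LinearMap.flip_apply, ← simpleRoot_eq_basisSingleOne, bform_simpleRoot_simpleRoot]
    exact formEntry_comm t s
  exact LinearMap.congr_fun₂ hflip y x

lemma formEntry_of_eq_two {s t : S} (h : M s t = 2) : formEntry M s t = 0 := by
  simp [formEntry, h]

lemma formEntry_of_eq_three {s t : S} (h : M s t = 3) : formEntry M s t = -(1 / 2) := by
  simp [formEntry, h, Real.cos_pi_div_three]

end BilinearForm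

def IsSimplyLaced (M : CoxeterMatrix S) : Prop :=
  ∀ s t : S, s ≠ t → M s t = 2 ∨ M s t = 3

namespace IsSimplyLaced

variable {M : CoxeterMatrix S}

lemma formEntry_nonpos (h : IsSimplyLaced M) {s t : S} (hst : s ≠ t) :
    formEntry M s t ≤ 0 := by
  rcases h s t hst with h2 | h3
  · rw [formEntry_of_eq_two h2]
  · rw [formEntry_of_eq_three h3]; norm_num

lemma exists_int_two_mul_formEntry (h : IsSimplyLaced M) (s t : S) :
    ∃ k : ℤ, 2 * formEntry M s t = k := by
  rcases eq_or_ne s t with rfl | hst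
  · exact ⟨2, by simp⟩
  rcases h s t hst with h2 | h3
  · exact ⟨0, by simp [formEntry_of_eq_two h2]⟩
  · exact ⟨-1, by simp [formEntry_of_eq_three h3]⟩

end IsSimplyLaced

namespace CoxeterSystem

variable {M : CoxeterMatrix S} (cs : CoxeterSystem M W)

lemma simple_mul_simple_comm_of_eq_two {s t : S} (h : M s t = 2) :
    cs.simple s * cs.simple t = cs.simple t * cs.simple s := by
  have := cs.wordProd_braidWord_eq t s
  rw [braidWord, braidWord, M.symmetric t s, h] at this
  simpa [alternatingWord, wordProd] using this.symm

lemma simple_braid_of_eq_three {s t : S} (h : M s t = 3) :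
    cs.simple s * cs.simple t * cs.simple s = cs.simple t * cs.simple s * cs.simple t := by
  have := cs.wordProd_braidWord_eq t s
  rw [braidWord, braidWord, M.symmetric t s, h] at this
  simpa [alternatingWord, wordProd, mul_assoc] using this

lemma exists_parabolic_factorization (T : Set S) (w : W) :
    ∃ v u : W, w = v * u ∧ u ∈ Subgroup.closure (cs.simple '' T) ∧
      cs.length w = cs.length v + cs.length u ∧ ∀ i ∈ T, ¬ cs.IsRightDescent v i := by
  induction hn : cs.length w using Nat.strong_induction_on generalizing w with
  | _ n ih =>
  by_cases hT : ∃ i ∈ T, cs.IsRightDescent w i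
  · obtain ⟨i, hiT, hi⟩ := hT
    obtain ⟨v, u, hvu, hu, hlen, hv⟩ := ih _ (hn ▸ hi) (w * cs.simple i) rfl
    have hw : w = v * (u * cs.simple i) := by
      rw [← mul_assoc, ← hvu, simple_mul_simple_cancel_right]
    refine ⟨v, u * cs.simple i, hw,
      mul_mem hu (Subgroup.subset_closure (Set.mem_image_of_mem _ hiT)), ?_, hv⟩
    have hle := cs.length_mul_le v (u * cs.simple i)
    have hle' := cs.length_mul_le u (cs.simple i)
    have hwi := cs.isRightDescent_iff.mp hi
    rw [← hw] at hle
    rw [length_simple] at hle'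
    omega
  · push Not at hT
    exact ⟨w, 1, (mul_one w).symm, one_mem _, by simp [hn], hT⟩

lemma mem_closure_pair {s t : S} (hm : M s t = 2 ∨ M s t = 3) {u : W}
    (hu : u ∈ Subgroup.closure {cs.simple s, cs.simple t}) :
    u = 1 ∨ u = cs.simple s ∨ u = cs.simple t ∨ u = cs.simple s * cs.simple t ∨
      u = cs.simple t * cs.simple s ∨ u = cs.simple s * cs.simple t * cs.simple s := by
  set P : W → Prop := fun x => x = 1 ∨ x = cs.simple s ∨ x = cs.simple t ∨
    x = cs.simple s * cs.simple t ∨ x = cs.simple t * cs.simple s ∨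
    x = cs.simple s * cs.simple t * cs.simple s with hP
  have hmul : ∀ x, P x → ∀ y ∈ ({cs.simple s, cs.simple t} : Set W), P (x * y) := by
    rintro x (rfl | rfl | rfl | rfl | rfl | rfl) y (rfl | rfl) <;>
      simp only [hP, one_mul, simple_mul_simple_self, simple_mul_simple_cancel_right,
        true_or, or_true]
    · rcases hm with h2 | h3
      · rw [← cs.simple_mul_simple_comm_of_eq_two h2, simple_mul_simple_cancel_right]
        simp
      · rw [← cs.simple_braid_of_eq_three h3]
        simp
    · rcases hm with h2 | h3
      · rw [cs.simple_mul_simple_comm_of_eq_two h2, simple_mul_simple_cancel_right,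
          simple_mul_simple_self]
        simp
      · rw [cs.simple_braid_of_eq_three h3, simple_mul_simple_cancel_right]
        simp
  have hinv : ∀ y ∈ ({cs.simple s, cs.simple t} : Set W), y⁻¹ = y := by
    rintro y (rfl | rfl) <;> exact inv_simple _ _
  induction hu using Subgroup.closure_induction_right with
  | one => exact Or.inl rfl
  | mul_right x _ y hy ih => exact hmul x ih y hy
  | mul_inv_cancel x _ y hy ih =>
    rw [hinv y hy]
    exact hmul x ih y hy

end CoxeterSystem

section Representation

variable {M : CoxeterMatrix S} {cs : CoxeterSystem M W}
  {ρ : W →* ((S →₀ ℝ) ≃ₗ[ℝ] (S →₀ ℝ))}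

def IsCanonicalRep (cs : CoxeterSystem M W) (ρ : W →* ((S →₀ ℝ) ≃ₗ[ℝ] (S →₀ ℝ))) : Prop :=
  ∀ (s : S) (v : S →₀ ℝ),
    ρ (cs.simple s) v = v - (2 * bform M (simpleRoot s) v) • simpleRoot s

lemma map_mul_apply (w w' : W) (v : S →₀ ℝ) : ρ (w * w') v = ρ w (ρ w' v) := by
  rw [map_mul, LinearEquiv.mul_apply]

lemma map_one_apply (v : S →₀ ℝ) : ρ 1 v = v := by
  rw [map_one]
  rfl

lemma map_apply_map_inv_apply (w : W) (v : S →₀ ℝ) : ρ w (ρ w⁻¹ v) = v := by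
  rw [← map_mul_apply, mul_inv_cancel, map_one_apply]

lemma simpleRoot_mem_rootSystem (s : S) : simpleRoot s ∈ rootSystem ρ :=
  ⟨(1, s), map_one_apply _⟩

lemma map_apply_mem_rootSystem {β : S →₀ ℝ} (hβ : β ∈ rootSystem ρ) (g : W) :
    ρ g β ∈ rootSystem ρ := by
  obtain ⟨⟨w, s⟩, rfl⟩ := hβ
  exact ⟨(g * w, s), map_mul_apply g w _⟩

namespace IsCanonicalRep

variable (hρ : IsCanonicalRep cs ρ)
include hρ

lemma apply_simpleRoot (s t : S) :
    ρ (cs.simple s) (simpleRoot t) = simpleRoot t - (2 * formEntry M s t) • simpleRoot s := by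
  rw [hρ, bform_simpleRoot_simpleRoot]

lemma apply_simpleRoot_self (s : S) : ρ (cs.simple s) (simpleRoot s) = -simpleRoot s := by
  rw [hρ.apply_simpleRoot, formEntry_self]
  module

lemma apply_simpleRoot_of_formEntry_eq_zero {s t : S} (h : formEntry M s t = 0) :
    ρ (cs.simple s) (simpleRoot t) = simpleRoot t := by
  rw [hρ.apply_simpleRoot, h]
  module

lemma bform_map (w : W) (x y : S →₀ ℝ) : bform M (ρ w x) (ρ w y) = bform M x y := by
  induction w using cs.simple_induction_left generalizing x y with
  | one => rw [map_one_apply, map_one_apply]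
  | mul_simple_left w s ih =>
    rw [map_mul_apply, map_mul_apply, hρ, hρ, ← ih x y]
    simp only [map_sub, map_smul, LinearMap.sub_apply, LinearMap.smul_apply, smul_eq_mul,
      bform_simpleRoot_simpleRoot, formEntry_self, bform_comm (ρ w x) (simpleRoot s)]
    ring

lemma bform_self_of_mem_rootSystem {β : S →₀ ℝ} (hβ : β ∈ rootSystem ρ) : bform M β β = 1 := by
  obtain ⟨⟨w, s⟩, rfl⟩ := hβ
  rw [hρ.bform_map, bform_simpleRoot_simpleRoot, formEntry_self]

lemma ne_zero_of_mem_rootSystem {β : S →₀ ℝ} (hβ : β ∈ rootSystem ρ) : β ≠ 0 := by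
  rintro rfl
  simpa using hρ.bform_self_of_mem_rootSystem hβ

lemma simple_injective : Function.Injective cs.simple := by
  intro s t h
  by_contra hst
  have hs := congrArg (fun w => ρ w (simpleRoot s) s) h
  simp only [hρ.apply_simpleRoot_self, hρ.apply_simpleRoot] at hs
  simp [simpleRoot, Ne.symm hst] at hs
  linarith

lemma exists_int_two_mul_bform (h : IsSimplyLaced M) {β : S →₀ ℝ} (hβ : β ∈ rootSystem ρ)
    (t : S) : ∃ k : ℤ, 2 * bform M (simpleRoot t) β = k := by
  obtain ⟨⟨w, s⟩, rfl⟩ := hβ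
  dsimp only
  induction w using cs.simple_induction_left generalizing t with
  | one =>
    rw [map_one_apply, bform_simpleRoot_simpleRoot]
    exact h.exists_int_two_mul_formEntry t s
  | mul_simple_left w i ih =>
    obtain ⟨k, hk⟩ := ih t
    obtain ⟨l, hl⟩ := ih i
    obtain ⟨m, hm⟩ := h.exists_int_two_mul_formEntry t i
    refine ⟨k - l * m, ?_⟩
    simp only [map_mul_apply, hρ i, map_sub, map_smul, smul_eq_mul,
      bform_simpleRoot_simpleRoot]
    push_cast
    rw [← hk, ← hl, ← hm]
    ring

lemma length_simple_mul_simple {s t : S} (hst : s ≠ t) :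
    cs.length (cs.simple s * cs.simple t) = 2 := by
  rcases cs.length_mul_simple (cs.simple s) t with h | h
  · rw [h, cs.length_simple]
  · rw [cs.length_simple] at h
    have h1 : cs.simple s * cs.simple t = 1 := cs.length_eq_zero_iff.mp (by omega)
    exact absurd (hρ.simple_injective (by rw [mul_eq_one_iff_eq_inv.mp h1, cs.inv_simple])) hst

lemma apply_mul_simpleRoot_of_eq_three {s t : S} (h3 : M s t = 3) :
    ρ (cs.simple s * cs.simple t) (simpleRoot s) = simpleRoot t := by
  rw [map_mul_apply, hρ.apply_simpleRoot, formEntry_comm, formEntry_of_eq_three h3, map_sub,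
    map_smul, hρ.apply_simpleRoot_self, hρ.apply_simpleRoot, formEntry_of_eq_three h3]
  module

lemma length_simple_mul_simple_mul_simple {s t : S} (h3 : M s t = 3) :
    cs.length (cs.simple s * cs.simple t * cs.simple s) = 3 := by
  have hst : s ≠ t := by
    rintro rfl
    simp at h3
  rcases cs.length_mul_simple (cs.simple s * cs.simple t) s with h | h
  · rw [h, hρ.length_simple_mul_simple hst]
  · -- otherwise `sts` would be a simple reflection, but it sends `α_s` to `-α_t`
    exfalso
    rw [hρ.length_simple_mul_simple hst] at h
    obtain ⟨i, hi⟩ := cs.length_eq_one_iff.mp (by omega :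
      cs.length (cs.simple s * cs.simple t * cs.simple s) = 1)
    have hv := hρ.apply_mul_simpleRoot_of_eq_three h3
    rw [← cs.simple_mul_simple_cancel_right (w := cs.simple s * cs.simple t) s, hi,
      map_mul_apply, hρ.apply_simpleRoot_self, map_neg, hρ.apply_simpleRoot,
      neg_eq_iff_eq_neg] at hv
    have hvs := congrArg (· s) hv
    by_cases his : i = s
    · subst his
      norm_num [simpleRoot, Ne.symm hst] at hvs
    · simp [simpleRoot, Ne.symm hst, his] at hvs

lemma exists_nonneg_of_mem_closure_pair (h : IsSimplyLaced M) {s t : S} (hst : s ≠ t) {u : W}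
    (hu : u ∈ Subgroup.closure {cs.simple s, cs.simple t}) (hus : ¬ cs.IsRightDescent u s) :
    ∃ a b : ℝ, 0 ≤ a ∧ 0 ≤ b ∧ ρ u (simpleRoot s) = a • simpleRoot s + b • simpleRoot t := by
  have ne_mul_simple : ∀ x : W, cs.length x < cs.length (x * cs.simple s) →
      u ≠ x * cs.simple s := by
    rintro x hx rfl
    exact hus (by rwa [CoxeterSystem.IsRightDescent, cs.simple_mul_simple_cancel_right])
  have hst2 := hρ.length_simple_mul_simple hst
  have hts2 := hρ.length_simple_mul_simple hst.symm
  have ht : ρ (cs.simple t) (simpleRoot s) =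
      (1 : ℝ) • simpleRoot s + (-(2 * formEntry M t s)) • simpleRoot t := by
    rw [hρ.apply_simpleRoot]
    module
  have hts : 0 ≤ -(2 * formEntry M t s) := by linarith [h.formEntry_nonpos hst.symm]
  rcases cs.mem_closure_pair (h s t hst) hu with rfl | rfl | rfl | rfl | rfl | rfl
  · exact ⟨1, 0, zero_le_one, le_rfl, by rw [map_one_apply]; module⟩
  · exact absurd (one_mul _).symm (ne_mul_simple 1 (by simp))
  · exact ⟨1, _, zero_le_one, hts, ht⟩
  · rcases h s t hst with h2 | h3
    · exact absurd (cs.simple_mul_simple_comm_of_eq_two h2)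
        (ne_mul_simple _ (by rw [hts2, cs.length_simple]; norm_num))
    · exact ⟨0, 1, le_rfl, zero_le_one, by rw [hρ.apply_mul_simpleRoot_of_eq_three h3]; module⟩
  · exact absurd rfl (ne_mul_simple _ (by rw [hts2, cs.length_simple]; norm_num))
  · rcases h s t hst with h2 | h3
    · rw [cs.simple_mul_simple_comm_of_eq_two h2, cs.simple_mul_simple_cancel_right]
      exact ⟨1, _, zero_le_one, hts, ht⟩
    · exact absurd rfl (ne_mul_simple _
        (by rw [hρ.length_simple_mul_simple_mul_simple h3, hst2]; norm_num))

theorem zero_le_apply_simpleRoot (h : IsSimplyLaced M) {w : W} {s : S}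
    (hws : ¬ cs.IsRightDescent w s) : 0 ≤ ρ w (simpleRoot s) := by
  induction hn : cs.length w using Nat.strong_induction_on generalizing w s with
  | _ n ih =>
  rcases eq_or_ne w 1 with rfl | hw1
  · rw [map_one_apply]
    exact Finsupp.single_nonneg.mpr zero_le_one
  obtain ⟨t, hwt⟩ := cs.exists_rightDescent_of_ne_one hw1
  have hst : s ≠ t := by
    rintro rfl
    exact hws hwt
  obtain ⟨v, u, rfl, hu, hlen, hv⟩ := cs.exists_parabolic_factorization {s, t} w
  rw [Set.image_pair] at hu
  have hu1 : cs.length u ≠ 0 := by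
    rw [Ne, cs.length_eq_zero_iff]
    rintro rfl
    rw [mul_one] at hwt
    exact hv t (by simp) hwt
  have hvn : cs.length v < n := by omega
  have hus : ¬ cs.IsRightDescent u s := by
    intro hus
    apply hws
    have := cs.length_mul_le v (u * cs.simple s)
    rw [CoxeterSystem.IsRightDescent] at hus ⊢
    rw [mul_assoc]
    omega
  obtain ⟨a, b, ha, hb, hab⟩ := hρ.exists_nonneg_of_mem_closure_pair h hst hu hus
  rw [map_mul_apply, hab, map_add, map_smul, map_smul]
  exact add_nonneg (smul_nonneg ha (ih _ hvn (hv s (by simp)) rfl))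
    (smul_nonneg hb (ih _ hvn (hv t (by simp)) rfl))

theorem apply_simpleRoot_nonpos (h : IsSimplyLaced M) {w : W} {s : S}
    (hws : cs.IsRightDescent w s) : ρ w (simpleRoot s) ≤ 0 := by
  have := hρ.zero_le_apply_simpleRoot h (cs.isRightDescent_iff_not_isRightDescent_mul.mp hws)
  rwa [map_mul_apply, hρ.apply_simpleRoot_self, map_neg, neg_nonneg] at this

lemma apply_simpleRoot_eq_neg_of_isRightDescent (h : IsSimplyLaced M) {z : W} (hz : z * z = 1)
    {s : S} (hzs : cs.IsRightDescent z s)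
    (hlen : ¬ cs.length (cs.simple s * z * cs.simple s) < cs.length z) :
    ρ z (simpleRoot s) = -simpleRoot s := by
  have hsz : cs.length (cs.simple s * z) + 1 = cs.length z := by
    rw [← cs.length_inv, mul_inv_rev, inv_eq_of_mul_eq_one_right hz, cs.inv_simple]
    exact cs.isRightDescent_iff.mp hzs
  have hpos := hρ.zero_le_apply_simpleRoot h (w := cs.simple s * z) (s := s) (by
    rw [cs.isRightDescent_iff]
    omega)
  have hneg := hρ.apply_simpleRoot_nonpos h hzs
  have hnorm := hρ.bform_map z (simpleRoot s) (simpleRoot s)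
  rw [map_mul_apply, hρ] at hpos
  -- `z α_s ≤ 0 ≤ s (z α_s)`, and `s` only changes the `s`-coordinate
  generalize ρ z (simpleRoot s) = v at hpos hneg hnorm ⊢
  have hv : v = v s • simpleRoot s := by
    ext u
    rcases eq_or_ne u s with rfl | hus
    · simp [simpleRoot]
    · have h1 := Finsupp.le_def.mp hpos u
      have h2 := Finsupp.le_def.mp hneg u
      simp [simpleRoot, Ne.symm hus] at h1 h2 ⊢
      linarith
  rw [hv] at hnorm
  have hvs : v s = -1 :=
    (mul_self_eq_one_iff.mp (by simpa using hnorm)).resolve_left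
      (by linarith [show v s ≤ 0 by simpa using Finsupp.le_def.mp hneg s])
  rw [hv, hvs, neg_one_smul]

end IsCanonicalRep

end Representation

section Reflections

variable {M : CoxeterMatrix S} {cs : CoxeterSystem M W} {ρ : W →* ((S →₀ ℝ) ≃ₗ[ℝ] (S →₀ ℝ))}
  {r : (S →₀ ℝ) → W} {β β' : S →₀ ℝ}

def IsRootReflection (cs : CoxeterSystem M W) (ρ : W →* ((S →₀ ℝ) ≃ₗ[ℝ] (S →₀ ℝ)))
    (r : (S →₀ ℝ) → W) : Prop :=
  ∀ (w : W) (s : S), r (ρ w (simpleRoot s)) = w * cs.simple s * w⁻¹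

lemma eq_or_eq_neg_of_eq_smul {x y : S →₀ ℝ} {c : ℝ} (hx : bform M x x = 1)
    (hy : bform M y y = 1) (h : x = c • y) : x = y ∨ x = -y := by
  have hc : c * c = 1 := by simpa [h, hy] using hx
  rcases mul_self_eq_one_iff.mp hc with rfl | rfl
  · exact Or.inl (by rw [h, one_smul])
  · exact Or.inr (by rw [h, neg_one_smul])

namespace IsRootReflection

variable (hr : IsRootReflection cs ρ r)
include hr

lemma map_apply (hβ : β ∈ rootSystem ρ) (g : W) : r (ρ g β) = MulAut.conj g (r β) := by
  obtain ⟨⟨w, s⟩, rfl⟩ := hβ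
  rw [← map_mul_apply, hr, hr, MulAut.conj_apply]
  group

lemma apply_simpleRoot (s : S) : r (simpleRoot s) = cs.simple s := by
  simpa using hr 1 s

lemma mul_self (hβ : β ∈ rootSystem ρ) : r β * r β = 1 := by
  obtain ⟨⟨w, s⟩, rfl⟩ := hβ
  rw [hr, ← MulAut.conj_apply, ← map_mul, cs.simple_mul_simple_self, map_one]

lemma neg (hρ : IsCanonicalRep cs ρ) (hβ : β ∈ rootSystem ρ) : r (-β) = r β := by
  obtain ⟨⟨w, s⟩, rfl⟩ := hβ
  dsimp only
  rw [← map_neg, ← hρ.apply_simpleRoot_self, ← map_mul_apply, hr, hr]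
  group

lemma eq_simple_of_eq_or_eq_neg (hρ : IsCanonicalRep cs ρ) {s : S}
    (hβ : β = simpleRoot s ∨ β = -simpleRoot s) : r β = cs.simple s := by
  rcases hβ with rfl | rfl
  · exact hr.apply_simpleRoot s
  · rw [hr.neg hρ (simpleRoot_mem_rootSystem s), hr.apply_simpleRoot]

lemma rho_apply (hρ : IsCanonicalRep cs ρ) (hβ : β ∈ rootSystem ρ) (v : S →₀ ℝ) :
    ρ (r β) v = v - (2 * bform M β v) • β := by
  obtain ⟨⟨w, s⟩, rfl⟩ := hβ
  rw [hr, map_mul_apply, map_mul_apply, hρ, map_sub, map_smul, map_apply_map_inv_apply,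
    ← hρ.bform_map w, map_apply_map_inv_apply]

lemma ne_one (hρ : IsCanonicalRep cs ρ) (hβ : β ∈ rootSystem ρ) : r β ≠ 1 := by
  intro h
  have := hr.rho_apply hρ hβ β
  rw [h, map_one_apply, hρ.bform_self_of_mem_rootSystem hβ, eq_sub_iff_add_eq,
    add_eq_left, smul_eq_zero] at this
  exact this.elim (by norm_num) (hρ.ne_zero_of_mem_rootSystem hβ)

lemma eq_or_eq_neg_of_eq (hρ : IsCanonicalRep cs ρ) (hβ : β ∈ rootSystem ρ)
    (hβ' : β' ∈ rootSystem ρ) (h : r β = r β') : β = β' ∨ β = -β' := by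
  have hββ := hr.rho_apply hρ hβ β
  rw [h, hr.rho_apply hρ hβ', hρ.bform_self_of_mem_rootSystem hβ] at hββ
  refine eq_or_eq_neg_of_eq_smul (hρ.bform_self_of_mem_rootSystem hβ)
    (hρ.bform_self_of_mem_rootSystem hβ') (c := bform M β' β) ?_
  linear_combination (norm := module) (1 / 2 : ℝ) • hββ

lemma mul_mul_self (hβ : β ∈ rootSystem ρ) (hβ' : β' ∈ rootSystem ρ)
    (hcomm : Commute (r β) (r β')) : (r β * r β') * (r β * r β') = 1 := by
  rw [← sq, hcomm.mul_pow, sq, sq, hr.mul_self hβ, hr.mul_self hβ', one_mul]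

lemma mul_ne_one (hβ' : β' ∈ rootSystem ρ) (hne : r β ≠ r β') : r β * r β' ≠ 1 := by
  rw [Ne, mul_eq_one_iff_eq_inv, inv_eq_of_mul_eq_one_right (hr.mul_self hβ')]
  exact hne

end IsRootReflection

end Reflections

lemma Int.eq_zero_or_eq_zero_of_sq_add_sq_eq_four {k l : ℤ} (h : k ^ 2 + l ^ 2 = 4) :
    k = 0 ∨ l = 0 := by
  have hk : k ≤ 2 := by nlinarith
  have hk' : -2 ≤ k := by nlinarith
  have hl : l ≤ 2 := by nlinarith
  have hl' : -2 ≤ l := by nlinarith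
  interval_cases k <;> interval_cases l <;> simp_all

section Commuting

variable {M : CoxeterMatrix S} {cs : CoxeterSystem M W} {ρ : W →* ((S →₀ ℝ) ≃ₗ[ℝ] (S →₀ ℝ))}
  {r : (S →₀ ℝ) → W} {β β' : S →₀ ℝ}

namespace IsRootReflection

variable (hr : IsRootReflection cs ρ r) (hρ : IsCanonicalRep cs ρ)
  (hβ : β ∈ rootSystem ρ) (hβ' : β' ∈ rootSystem ρ)
include hr hρ hβ hβ'

lemma bform_eq_zero_of_commute (hne : r β ≠ r β') (hcomm : Commute (r β) (r β')) :
    bform M β β' = 0 := by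
  -- `r_β β'` has reflection `r_β r_β' r_β = r_β'`, so it is `±β'`
  have hγ : r (ρ (r β) β') = r β' := by
    rw [hr.map_apply hβ', MulAut.conj_apply, hcomm.eq, mul_inv_cancel_right]
  rcases hr.eq_or_eq_neg_of_eq hρ (map_apply_mem_rootSystem hβ' _) hβ' hγ with h | h <;>
    rw [hr.rho_apply hρ hβ] at h
  · have h2 : (2 * bform M β β') • β = 0 := by
      linear_combination (norm := module) -h
    exact (smul_eq_zero.mp h2).elim (by intro h; linarith)
      (fun h => absurd h (hρ.ne_zero_of_mem_rootSystem hβ))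
  · have h2 : β' = bform M β β' • β := by
      linear_combination (norm := module) (1 / 2 : ℝ) • h
    rcases eq_or_eq_neg_of_eq_smul (hρ.bform_self_of_mem_rootSystem hβ')
      (hρ.bform_self_of_mem_rootSystem hβ) h2 with rfl | rfl
    · exact absurd rfl hne
    · exact absurd (hr.neg hρ hβ).symm hne

lemma rho_mul_apply (horth : bform M β β' = 0) (v : S →₀ ℝ) :
    ρ (r β * r β') v = v - (2 * bform M β v) • β - (2 * bform M β' v) • β' := by
  rw [map_mul_apply, hr.rho_apply hρ hβ', hr.rho_apply hρ hβ]
  simp only [map_sub, map_smul, smul_eq_mul, horth]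
  module

lemma eq_or_eq_neg_of_rho_mul_apply_eq_neg (h : IsSimplyLaced M) (horth : bform M β β' = 0)
    {u : S} (hu : ρ (r β * r β') (simpleRoot u) = -simpleRoot u) :
    (β = simpleRoot u ∨ β = -simpleRoot u) ∨ (β' = simpleRoot u ∨ β' = -simpleRoot u) := by
  rw [hr.rho_mul_apply hρ hβ hβ' horth] at hu
  obtain ⟨k, hk⟩ := hρ.exists_int_two_mul_bform h hβ u
  obtain ⟨l, hl⟩ := hρ.exists_int_two_mul_bform h hβ' u
  rw [bform_comm] at hk hl
  set a := bform M β (simpleRoot u)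
  set b := bform M β' (simpleRoot u)
  have hαu : simpleRoot u = a • β + b • β' := by
    linear_combination (norm := module) (1 / 2 : ℝ) • hu
  have hnorm : a ^ 2 + b ^ 2 = 1 := by
    have := bform_simpleRoot_simpleRoot (M := M) u u
    rw [formEntry_self, hαu] at this
    simp only [map_add, map_smul, LinearMap.add_apply, LinearMap.smul_apply, smul_eq_mul,
      hρ.bform_self_of_mem_rootSystem hβ, hρ.bform_self_of_mem_rootSystem hβ', horth,
      bform_comm β' β] at this
    linear_combination this
  have hkl : k ^ 2 + l ^ 2 = 4 := by
    have : (k : ℝ) ^ 2 + (l : ℝ) ^ 2 = 4 := by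
      rw [← hk, ← hl]
      linear_combination 4 * hnorm
    exact_mod_cast this
  have hsymm : ∀ {x : S →₀ ℝ}, simpleRoot u = x ∨ simpleRoot u = -x →
      x = simpleRoot u ∨ x = -simpleRoot u :=
    Or.imp Eq.symm (fun hx => by rw [hx, neg_neg])
  rcases Int.eq_zero_or_eq_zero_of_sq_add_sq_eq_four hkl with rfl | rfl
  · refine Or.inr (hsymm (eq_or_eq_neg_of_eq_smul (c := b) (by simp)
      (hρ.bform_self_of_mem_rootSystem hβ') ?_))
    rw [hαu, show a = 0 by push_cast at hk; linarith, zero_smul, zero_add]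
  · refine Or.inl (hsymm (eq_or_eq_neg_of_eq_smul (c := a) (by simp)
      (hρ.bform_self_of_mem_rootSystem hβ) ?_))
    rw [hαu, show b = 0 by push_cast at hl; linarith, zero_smul, add_zero]

end IsRootReflection

end Commuting

def SimultaneouslySimple (ρ : W →* ((S →₀ ℝ) ≃ₗ[ℝ] (S →₀ ℝ))) (β β' : S →₀ ℝ) : Prop :=
  ∃ (w : W) (s t : S), ρ w (simpleRoot s) = β ∧ ρ w (simpleRoot t) = β'

namespace SimultaneouslySimple

variable {M : CoxeterMatrix S} {cs : CoxeterSystem M W} {ρ : W →* ((S →₀ ℝ) ≃ₗ[ℝ] (S →₀ ℝ))}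
  {β β' : S →₀ ℝ}

lemma symm (h : SimultaneouslySimple ρ β β') : SimultaneouslySimple ρ β' β := by
  obtain ⟨w, s, t, hs, ht⟩ := h
  exact ⟨w, t, s, ht, hs⟩

lemma of_map (g : W) (h : SimultaneouslySimple ρ (ρ g β) (ρ g β')) :
    SimultaneouslySimple ρ β β' := by
  obtain ⟨w, s, t, hs, ht⟩ := h
  refine ⟨g⁻¹ * w, s, t, ?_, ?_⟩ <;>
    rw [map_mul_apply, ‹ρ w _ = _›, ← map_mul_apply, inv_mul_cancel, map_one_apply]

lemma neg_left (hρ : IsCanonicalRep cs ρ) (h : SimultaneouslySimple ρ β β')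
    (horth : bform M β β' = 0) : SimultaneouslySimple ρ (-β) β' := by
  obtain ⟨w, s, t, rfl, rfl⟩ := h
  rw [hρ.bform_map, bform_simpleRoot_simpleRoot] at horth
  refine ⟨w * cs.simple s, s, t, ?_, ?_⟩
  · rw [map_mul_apply, hρ.apply_simpleRoot_self, map_neg]
  · rw [map_mul_apply, hρ.apply_simpleRoot_of_formEntry_eq_zero horth]

lemma of_eq_or_eq_neg (hρ : IsCanonicalRep cs ρ) {s t : S}
    (hβ : β = simpleRoot s ∨ β = -simpleRoot s) (hβ' : β' = simpleRoot t ∨ β' = -simpleRoot t)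
    (horth : bform M β β' = 0) : SimultaneouslySimple ρ β β' := by
  have hst : bform M (simpleRoot s) (simpleRoot t) = 0 := by
    rcases hβ with rfl | rfl <;> rcases hβ' with rfl | rfl <;> simpa using horth
  have hts : bform M (simpleRoot t) (simpleRoot s) = 0 := by rwa [bform_comm]
  have base : SimultaneouslySimple ρ (simpleRoot s) (simpleRoot t) :=
    ⟨1, s, t, map_one_apply _, map_one_apply _⟩
  have base' : SimultaneouslySimple ρ (simpleRoot s) (-simpleRoot t) :=
    (base.symm.neg_left hρ hts).symm
  rcases hβ with rfl | rfl <;> rcases hβ' with rfl | rfl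
  · exact base
  · exact base'
  · exact base.neg_left hρ hst
  · exact base'.neg_left hρ (by simpa using hst)

end SimultaneouslySimple

section Main

variable {M : CoxeterMatrix S} {cs : CoxeterSystem M W} {ρ : W →* ((S →₀ ℝ) ≃ₗ[ℝ] (S →₀ ℝ))}
  {r : (S →₀ ℝ) → W} {β β' : S →₀ ℝ}

lemma lt_or_eq_or_eq_of_isRightDescent (hρ : IsCanonicalRep cs ρ) (hr : IsRootReflection cs ρ r)
    (h : IsSimplyLaced M) (hβ : β ∈ rootSystem ρ) (hβ' : β' ∈ rootSystem ρ) (hne : r β ≠ r β')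
    (hcomm : Commute (r β) (r β')) {u : S} (hu : cs.IsRightDescent (r β * r β') u) :
    cs.length (cs.simple u * (r β * r β') * cs.simple u) < cs.length (r β * r β') ∨
      (β = simpleRoot u ∨ β = -simpleRoot u) ∨ (β' = simpleRoot u ∨ β' = -simpleRoot u) := by
  by_cases hlt : cs.length (cs.simple u * (r β * r β') * cs.simple u) < cs.length (r β * r β')
  · exact Or.inl hlt
  · exact Or.inr (hr.eq_or_eq_neg_of_rho_mul_apply_eq_neg hρ hβ hβ' h
      (hr.bform_eq_zero_of_commute hρ hβ hβ' hne hcomm)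
      (hρ.apply_simpleRoot_eq_neg_of_isRightDescent h (hr.mul_mul_self hβ hβ' hcomm) hu hlt))

lemma SimultaneouslySimple.of_isRightDescent (hρ : IsCanonicalRep cs ρ)
    (hr : IsRootReflection cs ρ r) (h : IsSimplyLaced M) (hβ : β ∈ rootSystem ρ)
    (hβ' : β' ∈ rootSystem ρ) (hne : r β ≠ r β') (hcomm : Commute (r β) (r β')) {s : S}
    (hs : cs.IsRightDescent (r β * r β') s) (hβs : β = simpleRoot s ∨ β = -simpleRoot s)
    (of_shorter : ∀ u : S, cs.length (cs.simple u * (r β * r β') * cs.simple u) <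
      cs.length (r β * r β') → SimultaneouslySimple ρ β β') :
    SimultaneouslySimple ρ β β' := by
  -- with `z = r β * r β'`: `r β' = z s` is shorter than `z`, and any right descent `t` of
  -- `r β'` is a right descent of `z` other than `s`
  have hrβ := hr.eq_simple_of_eq_or_eq_neg hρ hβs
  have hz : r β * r β' * cs.simple s = r β' := by
    rw [hcomm.eq, hrβ, cs.simple_mul_simple_cancel_right]
  have hlen := cs.isRightDescent_iff.mp hs
  rw [hz] at hlen
  obtain ⟨t, ht⟩ := cs.exists_rightDescent_of_ne_one (hr.ne_one hρ hβ')
  have hts : t ≠ s := by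
    rintro rfl
    have hz' : r β' * cs.simple t = r β * r β' := by
      rw [← cs.simple_mul_simple_cancel_right (w := r β * r β') t, hz]
    rw [CoxeterSystem.IsRightDescent, hz'] at ht
    omega
  have hzt : cs.IsRightDescent (r β * r β') t := by
    have hle := cs.length_mul_le (cs.simple s) (r β' * cs.simple t)
    rw [cs.length_simple, ← mul_assoc, ← hrβ] at hle
    rw [CoxeterSystem.IsRightDescent] at ht ⊢
    omega
  rcases lt_or_eq_or_eq_of_isRightDescent hρ hr h hβ hβ' hne hcomm hzt with hlt | hβt | hβ't
  · exact of_shorter t hlt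
  · exact absurd (hρ.simple_injective (hrβ.symm.trans (hr.eq_simple_of_eq_or_eq_neg hρ hβt)))
      hts.symm
  · exact .of_eq_or_eq_neg hρ hβs hβ't (hr.bform_eq_zero_of_commute hρ hβ hβ' hne hcomm)

theorem SimultaneouslySimple.of_commute (hρ : IsCanonicalRep cs ρ) (hr : IsRootReflection cs ρ r)
    (h : IsSimplyLaced M) (hβ : β ∈ rootSystem ρ) (hβ' : β' ∈ rootSystem ρ) (hne : r β ≠ r β')
    (hcomm : Commute (r β) (r β')) : SimultaneouslySimple ρ β β' := by
  induction hn : cs.length (r β * r β') using Nat.strong_induction_on generalizing β β' with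
  | _ n ih =>
  have of_shorter : ∀ u : S, cs.length (cs.simple u * (r β * r β') * cs.simple u) <
      cs.length (r β * r β') → SimultaneouslySimple ρ β β' := by
    intro u hu
    have hconj := hr.map_apply hβ (cs.simple u)
    have hconj' := hr.map_apply hβ' (cs.simple u)
    refine .of_map (cs.simple u) (ih _ ?_ (map_apply_mem_rootSystem hβ _)
      (map_apply_mem_rootSystem hβ' _) ?_ ?_ rfl)
    · rwa [hconj, hconj', ← map_mul, MulAut.conj_apply, cs.inv_simple, ← hn]
    · rw [hconj, hconj']
      exact (MulAut.conj _).injective.ne hne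
    · rw [hconj, hconj']
      exact hcomm.map _
  obtain ⟨s, hs⟩ := cs.exists_rightDescent_of_ne_one (hr.mul_ne_one hβ' hne)
  rcases lt_or_eq_or_eq_of_isRightDescent hρ hr h hβ hβ' hne hcomm hs with hlt | hβs | hβ's
  · exact of_shorter s hlt
  · exact .of_isRightDescent hρ hr h hβ hβ' hne hcomm hs hβs of_shorter
  · rw [hcomm.eq] at hs of_shorter
    exact (SimultaneouslySimple.of_isRightDescent hρ hr h hβ' hβ hne.symm hcomm.symm hs hβ's
      fun u hu => (of_shorter u hu).symm).symm

end Main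

theorem statement15_general
    (M : CoxeterMatrix S) (cs : CoxeterSystem M W)
    (ρ : W →* ((S →₀ ℝ) ≃ₗ[ℝ] (S →₀ ℝ)))
    (hρ : ∀ (s : S) (v : S →₀ ℝ),
      ρ (cs.simple s) v = v - (2 * bform M (simpleRoot s) v) • simpleRoot s)
    (r : (S →₀ ℝ) → W)
    (hr : ∀ (w : W) (s : S), r (ρ w (simpleRoot s)) = w * cs.simple s * w⁻¹)
    (h23 : ∀ s t : S, s ≠ t → M s t = 2 ∨ M s t = 3)
    (β β' : S →₀ ℝ) (hβ : β ∈ rootSystem ρ) (hβ' : β' ∈ rootSystem ρ)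
    (hne : r β ≠ r β') (hcomm : r β * r β' = r β' * r β) :
    ∃ (w : W) (s t : S), ρ w (simpleRoot s) = β ∧ ρ w (simpleRoot t) = β' :=
  SimultaneouslySimple.of_commute (cs := cs) hρ hr h23 hβ hβ' hne hcomm

/-- Assume `m_{s,t} ∈ {2,3}` for all distinct `s, t ∈ S`.  Let
`β, β' ∈ Φ` be roots whose reflections `r_β` and `r_{β'}` are distinct and commute.  Then
there exist `w ∈ W` and `s, t ∈ S` with `β = w (α_s)` and `β' = w (α_t)`. -/
theorem statement15
    (M : CoxeterMatrix S) (cs : CoxeterSystem M W)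
    (ρ : W →* ((S →₀ ℝ) ≃ₗ[ℝ] (S →₀ ℝ)))
    (hρ : ∀ (s : S) (v : S →₀ ℝ),
      ρ (cs.simple s) v = v - (2 * bform M (simpleRoot s) v) • simpleRoot s)
    (hρinj : Function.Injective ρ)
    (hρform : ∀ (w : W) (x y : S →₀ ℝ), bform M (ρ w x) (ρ w y) = bform M x y)
    (r : (S →₀ ℝ) → W)
    (hr : ∀ (w : W) (s : S), r (ρ w (simpleRoot s)) = w * cs.simple s * w⁻¹)
    (h23 : ∀ s t : S, s ≠ t → M s t = 2 ∨ M s t = 3)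
    (β β' : S →₀ ℝ) (hβ : β ∈ rootSystem ρ) (hβ' : β' ∈ rootSystem ρ)
    (hne : r β ≠ r β') (hcomm : r β * r β' = r β' * r β) :
    ∃ (w : W) (s t : S), ρ w (simpleRoot s) = β ∧ ρ w (simpleRoot t) = β' :=
  statement15_general M cs ρ hρ r hr h23 β β' hβ hβ' hne hcomm
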